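/- If α (a vector of positive reals indexed by V) satisfies Ncond for the aggregated matching graph G_x, then the decomposed arrival vector β satisfies Ncond for the decomposition matching graph G_yz. -/

import Mathlib

open Classical Finset

noncomputable section

def nbr {V : Type} [Fintype V] (G : SimpleGraph V) (S : Finset V) : Finset V :=
  Finset.univ.filter fun j => ∃ i ∈ S, G.Adj i j

def aSum {V : Type} (α : V → ℝ) (S : Finset V) : ℝ := ∑ i ∈ S, α i

def IsIndep {V : Type} (G : SimpleGraph V) (I : Finset V) : Prop :=
  I.Nonempty ∧ ∀ i ∈ I, ∀ j ∈ I, ¬ G.Adj i j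

def indepSets {V : Type} [Fintype V] (G : SimpleGraph V) : Finset (Finset V) :=
  Finset.univ.filter fun I => IsIndep G I

def Ncond {V : Type} [Fintype V] (G : SimpleGraph V) (α : V → ℝ) : Prop :=
  ∀ I ∈ indepSets G, aSum α I < aSum α (nbr G I)

def Tlist {V : Type} [Fintype V] [DecidableEq V] (G : SimpleGraph V) (α : V → ℝ) :
    List V → Finset V → ℝ
  | [], _ => 1
  | i :: l, P =>
      α i / (aSum α (nbr G (insert i P)) - aSum α (insert i P)) * Tlist G α l (insert i P)

def Erat {V : Type} [Fintype V] [DecidableEq V] (G : SimpleGraph V) (α : V → ℝ) :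
    List V → Finset V → ℝ
  | [], _ => 0
  | i :: l, P =>
      aSum α (nbr G (insert i P)) / (aSum α (nbr G (insert i P)) - aSum α (insert i P)) +
        Erat G α l (insert i P)

def TI {V : Type} [Fintype V] [DecidableEq V] (G : SimpleGraph V) (α : V → ℝ) (I : Finset V) : ℝ :=
  ∑ l ∈ I.toList.permutations.toFinset, Tlist G α l ∅

def EI {V : Type} [Fintype V] [DecidableEq V] (G : SimpleGraph V) (α : V → ℝ) (I : Finset V) : ℝ :=
  ∑ l ∈ I.toList.permutations.toFinset, Erat G α l ∅ * Tlist G α l ∅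

def meanQ {V : Type} [Fintype V] [DecidableEq V] (G : SimpleGraph V) (α : V → ℝ) : ℝ :=
  (1 + ∑ I ∈ indepSets G, TI G α I)⁻¹ * ∑ I ∈ indepSets G, EI G α I

def IsWord {V : Type} (G : SimpleGraph V) (w : List V) : Prop :=
  w.Pairwise fun a b => ¬ G.Adj a b

def piHatAux {V : Type} [Fintype V] [DecidableEq V] (G : SimpleGraph V) (α : V → ℝ) :
    List V → Finset V → ℝ
  | [], _ => 1
  | i :: l, P => α i / aSum α (nbr G (insert i P)) * piHatAux G α l (insert i P)

def piHat {V : Type} [Fintype V] [DecidableEq V] (G : SimpleGraph V) (α : V → ℝ) (w : List V) : ℝ :=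
  piHatAux G α w ∅

def addEdge {V : Type} (G : SimpleGraph V) (u v : V) : SimpleGraph V :=
  G ⊔ SimpleGraph.fromEdgeSet {s(u, v)}

end

def psiMap {V : Type} (x : V) : V ⊕ Unit → V := Sum.elim id fun _ => x

def Gyz {V : Type} (G : SimpleGraph V) (x : V) : SimpleGraph (V ⊕ Unit) :=
  SimpleGraph.comap (psiMap x) G

noncomputable def betaArr {V : Type} [DecidableEq V] (α : V → ℝ) (x : V) (by_ bz : ℝ) :
    V ⊕ Unit → ℝ :=
  Sum.elim (fun v => if v = x then by_ else α v) fun _ => bz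

/-!
`G_yz` is the pullback of `G_x` along the map `ψ` collapsing `y` and `z` onto `x`, and `β` sums
to `α` over every fibre of `ψ`. An independent set `I` of `G_yz` maps to an independent set `ψ I`
of `G_x`, and `E(I)` is the full preimage of `E(ψ I)`. Hence
`β(I) ≤ β(ψ⁻¹ ψ I) = α(ψ I) < α(E(ψ I)) = β(E(I))`.
-/

section Comap

variable {V W : Type} [DecidableEq V] (G : SimpleGraph V) (f : W → V)

lemma IsIndep.image_of_comap {I : Finset W} (hI : IsIndep (G.comap f) I) :
    IsIndep G (I.image f) := by
  refine ⟨hI.1.image f, ?_⟩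
  simp only [mem_image]
  rintro _ ⟨a, ha, rfl⟩ _ ⟨b, hb, rfl⟩
  exact hI.2 a ha b hb

lemma nbr_comap [Fintype V] [Fintype W] (I : Finset W) :
    nbr (G.comap f) I = univ.filter fun a => f a ∈ nbr G (I.image f) := by
  ext a
  simp [nbr]

lemma aSum_preimage_of_sum_fiber [Fintype W] {α : V → ℝ} {β : W → ℝ}
    (hβ : ∀ v, ∑ a with f a = v, β a = α v) (S : Finset V) :
    aSum β (univ.filter fun a => f a ∈ S) = aSum α S := by
  rw [aSum, aSum, ← sum_fiberwise_eq_sum_filter]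
  exact sum_congr rfl fun v _ => hβ v

lemma aSum_le_aSum_preimage_image [Fintype W] {β : W → ℝ} (hβ : ∀ a, 0 ≤ β a) (I : Finset W) :
    aSum β I ≤ aSum β (univ.filter fun a => f a ∈ I.image f) :=
  sum_le_sum_of_subset_of_nonneg (fun a ha => by simpa using ⟨a, ha, rfl⟩)
    fun a _ _ => hβ a

theorem Ncond_comap_of_sum_fiber [Fintype V] [Fintype W] {α : V → ℝ} {β : W → ℝ} (hN : Ncond G α)
    (hβ₀ : ∀ a, 0 ≤ β a) (hβ : ∀ v, ∑ a with f a = v, β a = α v) :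
    Ncond (G.comap f) β := by
  intro I hI
  have hI' : I.image f ∈ indepSets G := by
    simp only [indepSets, mem_filter, mem_univ, true_and] at hI ⊢
    exact hI.image_of_comap G f
  calc aSum β I ≤ aSum β (univ.filter fun a => f a ∈ I.image f) :=
        aSum_le_aSum_preimage_image f hβ₀ I
    _ = aSum α (I.image f) := aSum_preimage_of_sum_fiber f hβ _
    _ < aSum α (nbr G (I.image f)) := hN _ hI'
    _ = aSum β (nbr (G.comap f) I) := by
        rw [nbr_comap, aSum_preimage_of_sum_fiber f hβ]

end Comap

section Decomposition

variable {V : Type} [DecidableEq V] {α : V → ℝ} {x : V} {by_ bz : ℝ}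

lemma betaArr_sum_fiber [Fintype V] (hyz : by_ + bz = α x) (v : V) :
    ∑ a with psiMap x a = v, betaArr α x by_ bz a = α v := by
  rw [sum_filter, Fintype.sum_sum_type, Fintype.sum_eq_single v ?_]
  · by_cases hv : v = x
    · simp [psiMap, betaArr, hv, hyz]
    · simp [psiMap, betaArr, hv, Ne.symm hv]
  · exact fun w hw => if_neg hw

lemma betaArr_nonneg (hpos : ∀ i, 0 < α i) (hy : 0 < by_) (hz : 0 < bz) (a : V ⊕ Unit) :
    0 ≤ betaArr α x by_ bz a := by
  rcases a with v | u
  · by_cases hv : v = x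
    · simpa [betaArr, hv] using hy.le
    · simpa [betaArr, hv] using (hpos v).le
  · simpa [betaArr] using hz.le

end Decomposition

theorem stmt13 {V : Type} [Fintype V] [DecidableEq V] (G : SimpleGraph V) (α : V → ℝ)
    (hpos : ∀ i, 0 < α i) (hN : Ncond G α) (x : V) (by_ bz : ℝ)
    (hy : 0 < by_) (hz : 0 < bz) (hyz : by_ + bz = α x) :
    Ncond (Gyz G x) (betaArr α x by_ bz) :=
  Ncond_comap_of_sum_fiber G (psiMap x) hN (betaArr_nonneg hpos hy hz) (betaArr_sum_fiber hyz)
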